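/- Fix n ∈ ℕ and an orthonormal basis {Λ(f_i)}_{i=1}^{n²} of L²(M_n). Let ∂ be the linear operator on L²(M_n) determined by ∂(Λ(f_i^*)) = Λ(f_i) for all i (well-defined and invertible since {Λ(f_i^*)}_i is also an orthonormal basis). Let 𝔣 be the flip on L²(M_n)⊗L²(M_n) (𝔣(u⊗v) = v⊗u), let 𝔡 be the conjugate-linear map on L²(M_n)⊗L²(M_n) sending ∑_{i,j} α_{i,j}·Λ(f_i)⊗Λ(f_j) to ∑_{i,j} conj(α_{i,j})·Λ(f_i)⊗Λ(f_j), and let J₀ be the conjugate-linear map determined by J₀(Λ(x)⊗Λ(y)) = Λ(y^*)⊗Λ(x^*). Let 𝒲 ⊆ L²(M_n)⊗L²(M_n) be a subspace and set 𝒰 := (∂^{-1}⊗1)(𝒲). Then the following are equivalent: (i) (𝔡∘𝔣)(𝒲) = 𝒲; (ii) J₀(𝒰) = 𝒰; (iii) the subspace Ψ^{-1}(𝒰) of B(L²(M_n)) (where 𝒰 is viewed inside M_n⊗M_n via Λ⊗Λ) is self-adjoint, i.e., closed under the adjoint T ↦ T^*. -/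

import Mathlib

open scoped ComplexOrder
open scoped Kronecker
open Matrix

noncomputable section

/-- Matrix units in `M_n`. -/
def eps {n : ℕ} (i j : Fin n) : Matrix (Fin n) (Fin n) ℂ := Matrix.single i j 1

/-- The linear isomorphism `Ψ : B(L²(M_n)) → M_n ⊗ M_n`, determined by
`Ψ(Θ_{Λ(x),Λ(y)}) = x^* ⊗ y`; in closed form `Ψ(T) = n ∑_{i,j} ε_{i,j}^* ⊗ T(ε_{i,j})`.
Here `L²(M_n) ⊗ L²(M_n)` is identified with `Matrix (Fin n × Fin n) (Fin n × Fin n) ℂ`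
via `Λ(x) ⊗ Λ(y) ↦ x ⊗ₖ y`. -/
def Psi (n : ℕ) (T : Matrix (Fin n) (Fin n) ℂ → Matrix (Fin n) (Fin n) ℂ) :
    Matrix (Fin n × Fin n) (Fin n × Fin n) ℂ :=
  (n : ℂ) • ∑ i, ∑ j, (eps i j)ᴴ ⊗ₖ (T (eps i j))

/-- The flip `𝔣` of `L²(M_n) ⊗ L²(M_n)`: `𝔣(Λ(x) ⊗ Λ(y)) = Λ(y) ⊗ Λ(x)`. -/
def flipT {n : ℕ} (M : Matrix (Fin n × Fin n) (Fin n × Fin n) ℂ) :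
    Matrix (Fin n × Fin n) (Fin n × Fin n) ℂ :=
  Matrix.of fun p q => M (p.2, p.1) (q.2, q.1)

/-- The conjugate-linear map `J₀`: `J₀(Λ(x) ⊗ Λ(y)) = Λ(y^*) ⊗ Λ(x^*)`. -/
def J0map {n : ℕ} (M : Matrix (Fin n × Fin n) (Fin n × Fin n) ℂ) :
    Matrix (Fin n × Fin n) (Fin n × Fin n) ℂ :=
  Matrix.of fun p q => (starRingEnd ℂ) (M (q.2, q.1) (p.2, p.1))

/-- The coefficient of `Λ(f_i) ⊗ Λ(f_j)` in `W`, with respect to the inner product of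
`L²(M_n) ⊗ L²(M_n)` (which in the Kronecker coordinates is `(1/n²)·` Frobenius). -/
def coeff {n : ℕ} (f : Fin (n ^ 2) → Matrix (Fin n) (Fin n) ℂ) (i j : Fin (n ^ 2))
    (W : Matrix (Fin n × Fin n) (Fin n × Fin n) ℂ) : ℂ :=
  ((n : ℂ) ^ 2)⁻¹ * ∑ p : Fin n × Fin n, ∑ q : Fin n × Fin n,
    (starRingEnd ℂ) ((f i ⊗ₖ f j) p q) * W p q

/-- The conjugate-linear map `𝔡`, conjugating the coefficients with respect to the basis
`{Λ(f_i) ⊗ Λ(f_j)}`. -/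
def dmap {n : ℕ} (f : Fin (n ^ 2) → Matrix (Fin n) (Fin n) ℂ)
    (W : Matrix (Fin n × Fin n) (Fin n × Fin n) ℂ) :
    Matrix (Fin n × Fin n) (Fin n × Fin n) ℂ :=
  ∑ i, ∑ j, (starRingEnd ℂ) (coeff f i j W) • (f i ⊗ₖ f j)

/-- For `T : L²(M_n) → L²(M_n)`, the operator `T ⊗ 1` on `L²(M_n) ⊗ L²(M_n)`. -/
def tensorFirst {n : ℕ} (T : Matrix (Fin n) (Fin n) ℂ → Matrix (Fin n) (Fin n) ℂ)
    (W : Matrix (Fin n × Fin n) (Fin n × Fin n) ℂ) :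
    Matrix (Fin n × Fin n) (Fin n × Fin n) ℂ :=
  Matrix.of fun p q => T (Matrix.of fun i k => W (i, p.2) (k, q.2)) p.1 q.1

/-- The adjoint of `T` with respect to the `L²(M_n)` inner product `⟨a,b⟩ = tr(a^* b)`,
in closed form. -/
def adjMap {n : ℕ} (T : Matrix (Fin n) (Fin n) ℂ → Matrix (Fin n) (Fin n) ℂ)
    (a : Matrix (Fin n) (Fin n) ℂ) : Matrix (Fin n) (Fin n) ℂ :=
  ∑ i, ∑ j, (Matrix.trace ((T (eps i j))ᴴ * a)) • eps i j

/-!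
Expand `W = ∑ cᵢⱼ fᵢ ⊗ fⱼ` in the orthonormal basis `{fᵢ ⊗ fⱼ}`. Since `∂⁻¹ fᵢ = fᵢ^*`, both
`J₀ ((∂⁻¹ ⊗ 1) W)` and `(∂⁻¹ ⊗ 1) ((𝔡 ∘ 𝔣) W)` equal `∑ conj(cᵢⱼ) fⱼ^* ⊗ fᵢ`, so
`J₀ ∘ (∂⁻¹ ⊗ 1) = (∂⁻¹ ⊗ 1) ∘ 𝔡 ∘ 𝔣`, and (i) ⇔ (ii) because `∂⁻¹ ⊗ 1` is injective.
For (ii) ⇔ (iii): `Ψ` is onto and intertwines the adjoint with `J₀`, i.e. `Ψ(T^*) = J₀ (Ψ T)`;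
as `J₀` is an involution, `J₀ 𝒰 = 𝒰` as soon as `J₀ 𝒰 ⊆ 𝒰`.
-/

section Biorthogonal

variable {K V ι : Type*} [Field K] [AddCommGroup V] [Module K V] [Fintype ι] [DecidableEq ι]

theorem linearIndependent_of_biorthogonal (v : ι → V) (φ : ι → Module.Dual K V)
    (hφv : ∀ i j, φ i (v j) = if i = j then 1 else 0) : LinearIndependent K v := by
  rw [Fintype.linearIndependent_iff]
  intro g hg i
  simpa [hφv] using congrArg (φ i) hg

theorem sum_dual_smul_eq_self_of_biorthogonal [FiniteDimensional K V] (v : ι → V)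
    (φ : ι → Module.Dual K V) (hφv : ∀ i j, φ i (v j) = if i = j then 1 else 0)
    (hcard : Fintype.card ι = Module.finrank K V) (x : V) : ∑ i, φ i x • v i = x := by
  let b := basisOfLinearIndependentOfCardEqFinrank' v
    (linearIndependent_of_biorthogonal v φ hφv) hcard
  have hφ_repr : ∀ i, φ i x = b.repr x i := by
    intro i
    conv_lhs => rw [← b.sum_repr x]
    simp [b, hφv]
  simpa only [hφ_repr, b, coe_basisOfLinearIndependentOfCardEqFinrank'] using b.sum_repr x

end Biorthogonal

theorem Function.Involutive.image_eq_self_iff_mapsTo {α : Type*} {g : α → α}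
    (hg : Function.Involutive g) {s : Set α} : g '' s = s ↔ Set.MapsTo g s s :=
  ⟨fun h _ hx => h ▸ Set.mem_image_of_mem g hx,
    fun h => h.image_subset.antisymm fun x hx => ⟨g x, h hx, hg x⟩⟩

theorem Matrix.trace_conjTranspose_mul_eq_sum {m R : Type*} [Fintype m]
    [NonUnitalNonAssocSemiring R] [StarRing R] (A B : Matrix m m R) :
    trace (Aᴴ * B) = ∑ p, ∑ q, star (A p q) * B p q := by
  simp only [trace, diag, mul_apply, conjTranspose_apply]
  exact Finset.sum_comm

theorem Matrix.trace_conjTranspose_mul_single {m R : Type*} [Fintype m] [DecidableEq m]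
    [NonUnitalNonAssocSemiring R] [StarRing R] (X : Matrix m m R) (a b : m) (c : R) :
    trace (Xᴴ * single a b c) = star (X a b) * c := by
  simp [trace_mul_single]

section Matrices

variable {n : ℕ}

theorem coeff_eq_trace (f : Fin (n ^ 2) → Matrix (Fin n) (Fin n) ℂ) (i j : Fin (n ^ 2))
    (W : Matrix (Fin n × Fin n) (Fin n × Fin n) ℂ) :
    coeff f i j W = ((n : ℂ) ^ 2)⁻¹ * trace ((f i ⊗ₖ f j)ᴴ * W) := by
  rw [coeff, trace_conjTranspose_mul_eq_sum]
  rfl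

def coeffLinearMap (f : Fin (n ^ 2) → Matrix (Fin n) (Fin n) ℂ) (i j : Fin (n ^ 2)) :
    Module.Dual ℂ (Matrix (Fin n × Fin n) (Fin n × Fin n) ℂ) where
  toFun := coeff f i j
  map_add' W V := by simp only [coeff_eq_trace, mul_add, trace_add]
  map_smul' c W := by
    simp only [coeff_eq_trace, Matrix.mul_smul, trace_smul, smul_eq_mul, RingHom.id_apply]
    ring

section Orthonormal

variable (f : Fin (n ^ 2) → Matrix (Fin n) (Fin n) ℂ)
  (hON : ∀ i j, trace ((f i)ᴴ * f j) / (n : ℂ) = if i = j then 1 else 0)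
include hON

theorem coeff_kronecker (i j k l : Fin (n ^ 2)) :
    coeff f i j (f k ⊗ₖ f l) = if (i, j) = (k, l) then 1 else 0 := by
  rw [coeff_eq_trace, conjTranspose_kronecker, ← mul_kronecker_mul, trace_kronecker,
    show ∀ a b : ℂ, ((n : ℂ) ^ 2)⁻¹ * (a * b) = a / n * (b / n) from fun a b => by ring,
    hON, hON]
  simp only [Prod.mk.injEq, ite_and, ite_mul, one_mul, zero_mul]

theorem sum_coeff_smul_kronecker (W : Matrix (Fin n × Fin n) (Fin n × Fin n) ℂ) :
    ∑ i, ∑ j, coeff f i j W • (f i ⊗ₖ f j) = W := by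
  have hcard : Fintype.card (Fin (n ^ 2) × Fin (n ^ 2)) =
      Module.finrank ℂ (Matrix (Fin n × Fin n) (Fin n × Fin n) ℂ) := by
    simp only [Fintype.card_prod, Fintype.card_fin, Module.finrank_matrix, Module.finrank_self]
    ring
  have h := sum_dual_smul_eq_self_of_biorthogonal (fun ij => f ij.1 ⊗ₖ f ij.2)
    (fun ij => coeffLinearMap f ij.1 ij.2)
    (fun _ _ => by exact coeff_kronecker f hON ..) hcard W
  rwa [Fintype.sum_prod_type] at h

end Orthonormal

theorem coeff_flipT (f : Fin (n ^ 2) → Matrix (Fin n) (Fin n) ℂ) (i j : Fin (n ^ 2))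
    (W : Matrix (Fin n × Fin n) (Fin n × Fin n) ℂ) :
    coeff f i j (flipT W) = coeff f j i W := by
  unfold coeff flipT
  congr 1
  rw [← (Equiv.prodComm (Fin n) (Fin n)).sum_comp]
  refine Finset.sum_congr rfl fun p _ => ?_
  rw [← (Equiv.prodComm (Fin n) (Fin n)).sum_comp]
  refine Finset.sum_congr rfl fun q _ => ?_
  simp [mul_comm]

theorem J0map_sum {α : Type*} (s : Finset α) (F : α → Matrix (Fin n × Fin n) (Fin n × Fin n) ℂ) :
    J0map (∑ a ∈ s, F a) = ∑ a ∈ s, J0map (F a) := by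
  ext p q
  simp [J0map, Matrix.sum_apply]

theorem J0map_smul (c : ℂ) (M : Matrix (Fin n × Fin n) (Fin n × Fin n) ℂ) :
    J0map (c • M) = star c • J0map M := by
  ext p q
  simp [J0map]

theorem J0map_kronecker (x y : Matrix (Fin n) (Fin n) ℂ) : J0map (x ⊗ₖ y) = yᴴ ⊗ₖ xᴴ := by
  ext p q
  simp [J0map, mul_comm]

theorem J0map_involutive : Function.Involutive (J0map (n := n)) := by
  intro M
  ext p q
  simp [J0map]

theorem tensorFirst_eq_submatrix (T : Matrix (Fin n) (Fin n) ℂ → Matrix (Fin n) (Fin n) ℂ)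
    (W : Matrix (Fin n × Fin n) (Fin n × Fin n) ℂ) :
    tensorFirst T W = of fun p q => T (W.submatrix (·, p.2) (·, q.2)) p.1 q.1 :=
  rfl

section TensorFirst

variable (T : Matrix (Fin n) (Fin n) ℂ →ₗ[ℂ] Matrix (Fin n) (Fin n) ℂ)

def tensorFirstLinearMap :
    Matrix (Fin n × Fin n) (Fin n × Fin n) ℂ →ₗ[ℂ] Matrix (Fin n × Fin n) (Fin n × Fin n) ℂ where
  toFun := tensorFirst T
  map_add' W V := by
    ext p q
    simp [tensorFirst_eq_submatrix, submatrix_add]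
  map_smul' c W := by
    ext p q
    simp [tensorFirst_eq_submatrix, submatrix_smul]

@[simp]
theorem tensorFirstLinearMap_apply (W : Matrix (Fin n × Fin n) (Fin n × Fin n) ℂ) :
    tensorFirstLinearMap T W = tensorFirst T W :=
  rfl

theorem tensorFirst_kronecker (x y : Matrix (Fin n) (Fin n) ℂ) :
    tensorFirst T (x ⊗ₖ y) = T x ⊗ₖ y := by
  ext p q
  have hslice : (x ⊗ₖ y).submatrix (·, p.2) (·, q.2) = y p.2 q.2 • x := by
    ext i k
    simp [mul_comm]
  simp [tensorFirst_eq_submatrix, hslice, mul_comm]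

end TensorFirst

theorem tensorFirst_injective {T : Matrix (Fin n) (Fin n) ℂ → Matrix (Fin n) (Fin n) ℂ}
    (hT : Function.Injective T) : Function.Injective (tensorFirst T) := by
  intro W V h
  ext ⟨a, b⟩ ⟨c, d⟩
  have hslice : T (of fun i k => W (i, b) (k, d)) = T (of fun i k => V (i, b) (k, d)) :=
    Matrix.ext fun a c => congrFun (congrFun h (a, b)) (c, d)
  exact congrFun (congrFun (hT hslice) a) c

theorem J0map_tensorFirst_symm (f : Fin (n ^ 2) → Matrix (Fin n) (Fin n) ℂ)
    (hON : ∀ i j, trace ((f i)ᴴ * f j) / (n : ℂ) = if i = j then 1 else 0)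
    (D : Matrix (Fin n) (Fin n) ℂ ≃ₗ[ℂ] Matrix (Fin n) (Fin n) ℂ) (hD : ∀ i, D ((f i)ᴴ) = f i)
    (W : Matrix (Fin n × Fin n) (Fin n × Fin n) ℂ) :
    J0map (tensorFirst D.symm W) = tensorFirst D.symm (dmap f (flipT W)) := by
  have hDf : ∀ i, D.symm (f i) = (f i)ᴴ := fun i => by rw [LinearEquiv.symm_apply_eq, hD]
  have hL : tensorFirst D.symm = tensorFirstLinearMap (D.symm : _ →ₗ[ℂ] _) := rfl
  conv_lhs => rw [← sum_coeff_smul_kronecker f hON W]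
  simp only [dmap, coeff_flipT, hL, map_sum, map_smul]
  simp only [tensorFirstLinearMap_apply, tensorFirst_kronecker]
  simp only [LinearEquiv.coe_coe, hDf, J0map_sum, J0map_smul, J0map_kronecker,
    conjTranspose_conjTranspose]
  exact Finset.sum_comm

theorem Psi_apply (T : Matrix (Fin n) (Fin n) ℂ → Matrix (Fin n) (Fin n) ℂ)
    (p q : Fin n × Fin n) : Psi n T p q = n * T (eps q.1 p.1) p.2 q.2 := by
  simp [Psi, eps, Matrix.sum_apply, single_apply, ite_and]

theorem adjMap_apply (T : Matrix (Fin n) (Fin n) ℂ → Matrix (Fin n) (Fin n) ℂ)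
    (x : Matrix (Fin n) (Fin n) ℂ) (b d : Fin n) :
    adjMap T x b d = trace ((T (eps b d))ᴴ * x) := by
  simp [adjMap, eps, Matrix.sum_apply, single_apply, ite_and]

theorem Psi_adjMap (T : Matrix (Fin n) (Fin n) ℂ → Matrix (Fin n) (Fin n) ℂ) :
    Psi n (adjMap T) = J0map (Psi n T) := by
  ext p q
  simp [J0map, Psi_apply, adjMap_apply, eps, trace_conjTranspose_mul_single]

theorem Psi_surjective :
    Function.Surjective fun T : Matrix (Fin n) (Fin n) ℂ →ₗ[ℂ] Matrix (Fin n) (Fin n) ℂ =>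
      Psi n T := by
  intro M
  rcases eq_or_ne n 0 with rfl | hn
  · exact ⟨0, Subsingleton.elim _ _⟩
  refine ⟨(stdBasis ℂ (Fin n) (Fin n)).constr ℂ fun ac =>
    (n : ℂ)⁻¹ • of fun b d => M (ac.2, b) (ac.1, d), ?_⟩
  ext p q
  have hn' : (n : ℂ) ≠ 0 := Nat.cast_ne_zero.mpr hn
  simp [Psi_apply, eps, ← stdBasis_eq_single, hn']

end Matrices

/-- For a subspace `𝒲 ⊆ L²(M_n) ⊗ L²(M_n)` and
`𝒰 = (∂^{-1} ⊗ 1)(𝒲)`, the conditions `(𝔡∘𝔣)(𝒲) = 𝒲`, `J₀(𝒰) = 𝒰` and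
"`Ψ^{-1}(𝒰)` is self-adjoint" are equivalent. -/
theorem pseudo_graph_symmetry_tfae {n : ℕ}
    (f : Fin (n ^ 2) → Matrix (Fin n) (Fin n) ℂ)
    (hON : ∀ i j, Matrix.trace ((f i)ᴴ * f j) / (n : ℂ) = if i = j then 1 else 0)
    (D : Matrix (Fin n) (Fin n) ℂ ≃ₗ[ℂ] Matrix (Fin n) (Fin n) ℂ)
    (hD : ∀ i, D ((f i)ᴴ) = f i)
    (𝒲 : Submodule ℂ (Matrix (Fin n × Fin n) (Fin n × Fin n) ℂ)) :
    (((fun W => dmap f (flipT W)) '' (𝒲 : Set _) = (𝒲 : Set _)) ↔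
      (J0map '' (tensorFirst (fun x => D.symm x) '' (𝒲 : Set _)) =
        tensorFirst (fun x => D.symm x) '' (𝒲 : Set _))) ∧
    (((fun W => dmap f (flipT W)) '' (𝒲 : Set _) = (𝒲 : Set _)) ↔
      (∀ T : Matrix (Fin n) (Fin n) ℂ →ₗ[ℂ] Matrix (Fin n) (Fin n) ℂ,
        Psi n T ∈ tensorFirst (fun x => D.symm x) '' (𝒲 : Set _) →
        Psi n (adjMap T) ∈ tensorFirst (fun x => D.symm x) '' (𝒲 : Set _))) := by
  have h12 : (fun W => dmap f (flipT W)) '' (𝒲 : Set _) = 𝒲 ↔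
      J0map '' (tensorFirst D.symm '' 𝒲) = tensorFirst D.symm '' 𝒲 := by
    rw [show J0map '' (tensorFirst D.symm '' 𝒲) =
        tensorFirst D.symm '' ((fun W => dmap f (flipT W)) '' 𝒲) by
      simp only [Set.image_image, J0map_tensorFirst_symm f hON D hD],
      Set.image_eq_image (tensorFirst_injective D.symm.injective)]
  have h23 : J0map '' (tensorFirst D.symm '' 𝒲) = tensorFirst D.symm '' 𝒲 ↔
      ∀ T : Matrix (Fin n) (Fin n) ℂ →ₗ[ℂ] Matrix (Fin n) (Fin n) ℂ,
        Psi n T ∈ tensorFirst D.symm '' 𝒲 → Psi n (adjMap T) ∈ tensorFirst D.symm '' 𝒲 := by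
    simp only [J0map_involutive.image_eq_self_iff_mapsTo, Psi_adjMap]
    exact Psi_surjective.forall
  exact ⟨h12, h12.trans h23⟩
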